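/- Fix d ∈ ℕ, t ≥ 0, Δt > 0, γ ∈ (0, 1) and B > 0, and set σ² = (t+(1+γ)Δt)² − t² and λ(γ) = 2Q(B/(2σ)) (with σ = √((t+(1+γ)Δt)² − t²)). Let μ and ν be Borel probability measures on ℝ^d whose supports are contained in the closed ball of radius B/2 centered at the origin, let φ = N(0, σ²I_d), and let T : ℝ^d → ℝ^d be any Borel measurable map (the deterministic backward-ODE map). Then TV(T_*(μ * φ), T_*(ν * φ)) ≤ (1 − λ(γ))·TV(μ, ν). -/

import Mathlib

open MeasureTheory

noncomputable section

/-- Total variation distance between two measures: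
`TV(μ, ν) = sup over Borel sets A of |μ(A) − ν(A)|`. -/
def tvDist {E : Type*} [MeasurableSpace E] (μ ν : Measure E) : ℝ :=
  ⨆ A : {A : Set E // MeasurableSet A}, |(μ A.1).toReal - (ν A.1).toReal|

/-- `π` is a coupling of `μ` and `ν`. -/
def IsCoupling {E : Type*} [MeasurableSpace E] (π : Measure (E × E)) (μ ν : Measure E) : Prop :=
  π.map Prod.fst = μ ∧ π.map Prod.snd = ν

/-- Wasserstein-1 distance: infimum over couplings of `∫ ‖x − y‖ dπ`. -/
def W1 {E : Type*} [MeasurableSpace E] [NormedAddCommGroup E] (μ ν : Measure E) : ℝ :=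
  sInf {r : ℝ | ∃ π : Measure (E × E), IsProbabilityMeasure π ∧ IsCoupling π μ ν ∧
    r = ∫ p, ‖p.1 - p.2‖ ∂π}

/-- The isotropic Gaussian measure `N(m, σ²I_d)` on `ℝ^d`, given by its Lebesgue density. -/
def gaussianE (d : ℕ) (m : EuclideanSpace ℝ (Fin d)) (σ2 : ℝ) :
    Measure (EuclideanSpace ℝ (Fin d)) :=
  volume.withDensity fun x =>
    ENNReal.ofReal ((2 * Real.pi * σ2) ^ (-(d : ℝ) / 2) * Real.exp (-‖x - m‖ ^ 2 / (2 * σ2)))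

/-- Standard Gaussian tail function `Q(r) = P(a ≥ r)` for `a ~ N(0,1)`. -/
def gaussQ (r : ℝ) : ℝ := (ProbabilityTheory.gaussianReal 0 1 (Set.Ici r)).toReal

/-- Standard normal cumulative distribution function `Φ`. -/
def stdCDF (r : ℝ) : ℝ := (ProbabilityTheory.gaussianReal 0 1 (Set.Iic r)).toReal

/-- The (topological) support of a measure: points all of whose neighborhoods
have positive measure. -/
def msupport {E : Type*} [TopologicalSpace E] [MeasurableSpace E] (μ : Measure E) : Set E :=
  {x | ∀ U ∈ nhds x, μ U ≠ 0}

/-!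
Fix a Borel set `S` and put `g x = N(x, σ²I)(S)`, so that `(μ ∗ φ)(S) = ∫ g dμ`. For two centres
`x ≠ y`, the difference `N(x, σ²I)(S) − N(y, σ²I)(S)` is largest when `S` is the half-space
`{‖z − x‖ ≤ ‖z − y‖}` on which the density centred at `x` dominates; projecting onto `x − y`, that
half-space has masses `Q(−‖x − y‖/(2σ))` and `Q(‖x − y‖/(2σ))`, so the difference is at most
`1 − 2Q(‖x − y‖/(2σ)) ≤ 1 − λ(γ)` for centres in the ball of radius `B/2`. A function whose
oscillation on a set carrying `μ` and `ν` is at most `c` has integrals against `μ` and `ν` differing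
by at most `c · TV(μ, ν)` (layer-cake formula). Applying this to the preimages `T⁻¹(A)` gives the
bound for the pushforwards.
-/

open Set ProbabilityTheory
open scoped ENNReal RealInnerProductSpace

section TotalVariation

variable {α : Type*} [MeasurableSpace α] {μ ν : Measure α}

lemma tvDist_comm (μ ν : Measure α) : tvDist μ ν = tvDist ν μ :=
  iSup_congr fun _ => abs_sub_comm _ _

lemma tvDist_le {c : ℝ} (h : ∀ A, MeasurableSet A → |(μ A).toReal - (ν A).toReal| ≤ c) :
    tvDist μ ν ≤ c :=
  ciSup_le fun A => h A.1 A.2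

lemma toReal_sub_toReal_le_tvDist [IsFiniteMeasure μ] [IsFiniteMeasure ν] {A : Set α}
    (hA : MeasurableSet A) : (μ A).toReal - (ν A).toReal ≤ tvDist μ ν := by
  have hbdd : BddAbove (range fun B : {B : Set α // MeasurableSet B} =>
      |(μ B.1).toReal - (ν B.1).toReal|) := by
    refine ⟨μ.real univ + ν.real univ, ?_⟩
    rintro _ ⟨⟨B, -⟩, rfl⟩
    change |μ.real B - ν.real B| ≤ _
    have hμ : μ.real B ≤ μ.real univ := measureReal_mono (subset_univ _)
    have hν : ν.real B ≤ ν.real univ := measureReal_mono (subset_univ _)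
    exact abs_sub_le_iff.2 ⟨by linarith [measureReal_nonneg (μ := ν) (s := B)],
      by linarith [measureReal_nonneg (μ := μ) (s := B)]⟩
  exact (le_abs_self _).trans (le_ciSup hbdd ⟨A, hA⟩)

lemma toReal_sub_toReal_le_of_restrict_le [IsFiniteMeasure μ] [IsFiniteMeasure ν]
    {H S : Set α} (hH : MeasurableSet H) (hS : MeasurableSet S)
    (hνμ : ν.restrict H ≤ μ.restrict H) (hμν : μ.restrict Hᶜ ≤ ν.restrict Hᶜ) :
    (μ S).toReal - (ν S).toReal ≤ (μ H).toReal - (ν H).toReal := by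
  have hHS : ν.real (H \ S) ≤ μ.real (H \ S) := by
    have := hνμ (H \ S)
    rw [Measure.restrict_eq_self _ sdiff_subset, Measure.restrict_eq_self _ sdiff_subset] at this
    exact ENNReal.toReal_mono (measure_ne_top _ _) this
  have hSH : μ.real (S \ H) ≤ ν.real (S \ H) := by
    have := hμν (S \ H)
    rw [Measure.restrict_eq_self _ (fun _ hx => hx.2),
      Measure.restrict_eq_self _ (fun _ hx => hx.2)] at this
    exact ENNReal.toReal_mono (measure_ne_top _ _) this
  have hμS := measureReal_inter_add_sdiff (μ := μ) (s := S) hH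
  have hνS := measureReal_inter_add_sdiff (μ := ν) (s := S) hH
  have hμH := measureReal_inter_add_sdiff (μ := μ) (s := H) hS
  have hνH := measureReal_inter_add_sdiff (μ := ν) (s := H) hS
  rw [inter_comm] at hμH hνH
  simp only [← measureReal_def]
  linarith

lemma integral_sub_integral_le_mul_tvDist [IsProbabilityMeasure μ] [IsProbabilityMeasure ν]
    {f : α → ℝ} (hf : Measurable f) {c : ℝ}
    (hfμ : ∀ᵐ x ∂μ, f x ∈ Icc 0 c) (hfν : ∀ᵐ x ∂ν, f x ∈ Icc 0 c) :
    ∫ x, f x ∂μ - ∫ x, f x ∂ν ≤ c * tvDist μ ν := by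
  obtain ⟨x₀, hx₀⟩ := hfμ.exists
  have hc : 0 ≤ c := hx₀.1.trans hx₀.2
  have hlayer : ∀ ρ : Measure α, [IsProbabilityMeasure ρ] → (∀ᵐ x ∂ρ, f x ∈ Icc 0 c) →
      ∫ x, f x ∂ρ = ∫ t in Ioc 0 c, ρ.real {x | t ≤ f x} := by
    intro ρ _ hρ
    have hint : Integrable f ρ := Integrable.of_bound hf.aestronglyMeasurable c
      (hρ.mono fun x hx => by rw [Real.norm_eq_abs, abs_of_nonneg hx.1]; exact hx.2)
    exact hint.integral_eq_integral_Ioc_meas_le (hρ.mono fun _ hx => hx.1)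
      (hρ.mono fun _ hx => hx.2)
  have hlevel : ∀ ρ : Measure α, [IsProbabilityMeasure ρ] →
      IntegrableOn (fun t => ρ.real {x | t ≤ f x}) (Ioc 0 c) := by
    intro ρ _
    have hanti : Antitone fun t => ρ.real {x | t ≤ f x} :=
      fun s t hst => measureReal_mono fun x hx => hst.trans hx
    exact (hanti.locallyIntegrable.integrableOn_isCompact isCompact_Icc).mono_set
      Ioc_subset_Icc_self
  rw [hlayer μ hfμ, hlayer ν hfν, ← integral_sub (hlevel μ) (hlevel ν)]
  calc ∫ t in Ioc 0 c, (μ.real {x | t ≤ f x} - ν.real {x | t ≤ f x})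
      ≤ ∫ t in Ioc 0 c, tvDist μ ν := by
        refine setIntegral_mono_on ((hlevel μ).sub (hlevel ν)) ?_ measurableSet_Ioc
          fun t _ => toReal_sub_toReal_le_tvDist (measurableSet_le measurable_const hf)
        exact integrableOn_const measure_Ioc_lt_top.ne
    _ = c * tvDist μ ν := by simp [hc]

lemma integral_sub_integral_le_of_forall_sub_le [IsProbabilityMeasure μ]
    [IsProbabilityMeasure ν] {g : α → ℝ} (hg : Measurable g) {K : Set α}
    (hμK : ∀ᵐ x ∂μ, x ∈ K) (hνK : ∀ᵐ x ∂ν, x ∈ K) {c : ℝ}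
    (hosc : ∀ x ∈ K, ∀ y ∈ K, g x - g y ≤ c) :
    ∫ x, g x ∂μ - ∫ x, g x ∂ν ≤ c * tvDist μ ν := by
  obtain ⟨x₀, hx₀⟩ := hμK.exists
  have hbdd : BddBelow (g '' K) :=
    ⟨g x₀ - c, by rintro _ ⟨y, hy, rfl⟩; linarith [hosc x₀ hx₀ y hy]⟩
  set a := sInf (g '' K)
  have hrange : ∀ x ∈ K, g x - a ∈ Icc 0 c := fun x hx =>
    ⟨sub_nonneg.2 (csInf_le hbdd (mem_image_of_mem g hx)),
      sub_le_comm.1 (le_csInf ⟨g x₀, mem_image_of_mem g hx₀⟩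
        (by rintro _ ⟨y, hy, rfl⟩; linarith [hosc x hx y hy]))⟩
  have hint : ∀ ρ : Measure α, [IsProbabilityMeasure ρ] → (∀ᵐ x ∂ρ, x ∈ K) →
      ∫ x, (g x - a) ∂ρ = ∫ x, g x ∂ρ - a := by
    intro ρ _ hρ
    have hg_int : Integrable g ρ := by
      refine Integrable.of_bound hg.aestronglyMeasurable (|a| + c) (hρ.mono fun x hx => ?_)
      obtain ⟨h0, hc⟩ := hrange x hx
      rw [Real.norm_eq_abs, abs_le]
      constructor <;> linarith [neg_abs_le a, le_abs_self a]
    simp [integral_sub hg_int (integrable_const a)]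
  have key := integral_sub_integral_le_mul_tvDist (hg.sub_const a) (hμK.mono hrange)
    (hνK.mono hrange)
  rwa [hint μ hμK, hint ν hνK, sub_sub_sub_cancel_right] at key

end TotalVariation

lemma msupport_eq_support {E : Type*} [TopologicalSpace E] [MeasurableSpace E]
    (μ : Measure E) : msupport μ = μ.support := by
  ext x
  simp [msupport, Measure.mem_support_iff_forall, pos_iff_ne_zero]

lemma MeasureTheory.Measure.conv_apply_eq_lintegral {G : Type*} [AddMonoid G] [MeasurableSpace G]
    [MeasurableAdd₂ G] (μ ν : Measure G) [SFinite ν] {s : Set G} (hs : MeasurableSet s) :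
    (μ ∗ ν) s = ∫⁻ x, ν ((x + ·) ⁻¹' s) ∂μ := by
  rw [← lintegral_indicator_one hs, Measure.lintegral_conv (measurable_one.indicator hs)]
  refine lintegral_congr fun x => ?_
  rw [← lintegral_indicator_one (measurable_const_add x hs)]
  rfl

lemma measurable_measure_preimage_add_left {G : Type*} [AddMonoid G] [MeasurableSpace G]
    [MeasurableAdd₂ G] (ν : Measure G) [SFinite ν] {s : Set G} (hs : MeasurableSet s) :
    Measurable fun x => ν ((x + ·) ⁻¹' s) :=
  measurable_measure_prodMk_left (measurable_add hs)

theorem lintegral_fin_nat_prod_eq_prod {n : ℕ} {E : Type*} [MeasurableSpace E]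
    {μ : Fin n → Measure E} [∀ i, SigmaFinite (μ i)]
    {f : Fin n → E → ℝ≥0∞} (hf : ∀ i, Measurable (f i)) :
    ∫⁻ x : Fin n → E, ∏ i, f i (x i) ∂(Measure.pi μ) = ∏ i, ∫⁻ x, f i x ∂(μ i) := by
  induction n with
  | zero => simp
  | succ n ih =>
    calc
      _ = ∫⁻ x : E × (Fin n → E),
            f 0 x.1 * ∏ i : Fin n, f (Fin.succ i) (x.2 i)
            ∂((μ 0).prod (Measure.pi fun i => μ i.succ)) := by
        rw [← (measurePreserving_piFinSuccAbove μ 0).symm.lintegral_comp_emb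
          (MeasurableEquiv.measurableEmbedding _)]
        simp_rw [MeasurableEquiv.piFinSuccAbove_symm_apply, Fin.insertNthEquiv,
          Fin.prod_univ_succ, Fin.insertNth_zero, Equiv.coe_fn_mk, Fin.cons_succ,
          Fin.zero_succAbove, cast_eq, Fin.cons_zero]
      _ = (∫⁻ x, f 0 x ∂μ 0) * ∏ i : Fin n, ∫⁻ x, f (Fin.succ i) x ∂(μ i.succ) := by
        rw [← ih fun i => hf _]
        exact lintegral_prod_mul (hf 0).aemeasurable
          (Finset.measurable_prod _ fun i _ => (hf _).comp (measurable_pi_apply i)).aemeasurable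
      _ = ∏ i, ∫⁻ x, f i x ∂(μ i) := by rw [Fin.prod_univ_succ]

theorem lintegral_fintype_prod_eq_prod {ι : Type*} [Fintype ι] {E : Type*} [MeasurableSpace E]
    {μ : ι → Measure E} [∀ i, SigmaFinite (μ i)]
    {f : ι → E → ℝ≥0∞} (hf : ∀ i, Measurable (f i)) :
    ∫⁻ x : ι → E, ∏ i, f i (x i) ∂(Measure.pi μ) = ∏ i, ∫⁻ x, f i x ∂(μ i) := by
  let e := (Fintype.equivFin ι).symm
  rw [← (measurePreserving_piCongrLeft _ e).lintegral_comp_emb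
    (MeasurableEquiv.measurableEmbedding _)]
  simp_rw [← e.prod_comp, MeasurableEquiv.coe_piCongrLeft, Equiv.piCongrLeft_apply_apply]
  exact lintegral_fin_nat_prod_eq_prod (μ := fun i => μ (e i)) fun i => hf _

theorem MeasureTheory.Measure.pi_withDensity {ι : Type*} [Fintype ι] {E : Type*}
    [MeasurableSpace E] {μ : ι → Measure E} [∀ i, SigmaFinite (μ i)]
    {f : ι → E → ℝ≥0∞} (hf : ∀ i, Measurable (f i))
    [∀ i, SigmaFinite ((μ i).withDensity (f i))] :
    Measure.pi (fun i => (μ i).withDensity (f i))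
      = (Measure.pi μ).withDensity fun x => ∏ i, f i (x i) := by
  refine Measure.pi_eq fun s hs => ?_
  have hbox : ∀ x, (univ.pi s).indicator (fun x => ∏ i, f i (x i)) x
      = ∏ i, (s i).indicator (f i) (x i) := by
    intro x
    by_cases hx : x ∈ univ.pi s
    · rw [indicator_of_mem hx]
      exact Finset.prod_congr rfl fun i _ => (indicator_of_mem (hx i (mem_univ i)) _).symm
    · obtain ⟨i, hi⟩ : ∃ i, x i ∉ s i := by simpa using hx
      rw [indicator_of_notMem hx, Finset.prod_eq_zero (Finset.mem_univ i)
        (indicator_of_notMem hi _)]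
  rw [withDensity_apply _ (MeasurableSet.univ_pi hs), ← lintegral_indicator
    (MeasurableSet.univ_pi hs), lintegral_congr hbox,
    lintegral_fintype_prod_eq_prod fun i => (hf i).indicator (hs i)]
  simp_rw [lintegral_indicator (hs _), withDensity_apply _ (hs _)]

lemma norm_le_norm_add_iff_inner {E : Type*} [NormedAddCommGroup E] [InnerProductSpace ℝ E]
    (a b : E) : ‖a‖ ≤ ‖a + b‖ ↔ -(‖b‖ ^ 2 / 2) ≤ ⟪a, b⟫ := by
  rw [← sq_le_sq₀ (norm_nonneg _) (norm_nonneg _), norm_add_sq_real]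
  constructor <;> intro <;> linarith

lemma norm_sub_le_norm_iff_inner {E : Type*} [NormedAddCommGroup E] [InnerProductSpace ℝ E]
    (a b : E) : ‖a - b‖ ≤ ‖a‖ ↔ ‖b‖ ^ 2 / 2 ≤ ⟪a, b⟫ := by
  rw [← sq_le_sq₀ (norm_nonneg _) (norm_nonneg _), norm_sub_sq_real]
  constructor <;> intro <;> linarith

lemma gaussQ_antitone : Antitone gaussQ := fun _ _ hrs =>
  ENNReal.toReal_mono (measure_ne_top _ _) (measure_mono (Ici_subset_Ici.2 hrs))

lemma gaussQ_neg (r : ℝ) : gaussQ (-r) = 1 - gaussQ r := by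
  have := nullSingletonClass_gaussianReal (μ := 0) one_ne_zero
  have hsymm : gaussianReal 0 1 (Ici (-r)) = gaussianReal 0 1 (Iic r) := by
    conv_lhs => rw [← neg_zero, ← gaussianReal_map_neg]
    rw [Measure.map_apply measurable_neg measurableSet_Ici]
    congr 1
    ext y
    simp
  rw [gaussQ, gaussQ, hsymm, ← compl_Ioi, prob_compl_eq_one_sub measurableSet_Ioi,
    measure_congr Ioi_ae_eq_Ici, ENNReal.toReal_sub_of_le prob_le_one ENNReal.one_ne_top,
    ENNReal.toReal_one]

lemma gaussQ_zero : gaussQ 0 = 1 / 2 := by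
  linarith [neg_zero (G := ℝ) ▸ gaussQ_neg 0]

lemma gaussianReal_eq_map_std (m : ℝ) {σ2 : ℝ} (hσ2 : 0 ≤ σ2) :
    gaussianReal m σ2.toNNReal = (gaussianReal 0 1).map fun y => m + √σ2 * y := by
  rw [show (fun y => m + √σ2 * y) = (m + ·) ∘ (√σ2 * ·) from rfl,
    ← Measure.map_map (measurable_const_add m) (measurable_const_mul _),
    gaussianReal_map_const_mul, gaussianReal_map_const_add]
  congr 1
  · simp
  · ext
    simp [Real.sq_sqrt hσ2, hσ2]

lemma stdGaussian_setOf_le_inner {E : Type*} [NormedAddCommGroup E] [InnerProductSpace ℝ E]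
    [FiniteDimensional ℝ E] [MeasurableSpace E] [BorelSpace E] {v : E} (hv : v ≠ 0) (a : ℝ) :
    (stdGaussian E {w | a ≤ ⟪v, w⟫}).toReal = gaussQ (a / ‖v‖) := by
  have hmap : (stdGaussian E).map (innerSL ℝ v) = gaussianReal 0 (‖v‖ ^ 2).toNNReal := by
    rw [IsGaussian.map_eq_gaussianReal, integral_strongDual_stdGaussian,
      variance_dual_stdGaussian, innerSL_apply_norm]
  have hset : {w | a ≤ ⟪v, w⟫} = innerSL ℝ v ⁻¹' Ici a := rfl
  rw [hset, ← Measure.map_apply (by fun_prop) measurableSet_Ici, hmap,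
    gaussianReal_eq_map_std 0 (sq_nonneg _), Measure.map_apply (by fun_prop) measurableSet_Ici,
    Real.sqrt_sq (norm_nonneg v), gaussQ]
  congr 2
  ext y
  simp [div_le_iff₀ (norm_pos_iff.2 hv), mul_comm]

section Gaussian

variable {d : ℕ} {σ2 : ℝ}

lemma ofReal_gaussianE_density_eq_prod (hσ2 : 0 < σ2) (m x : EuclideanSpace ℝ (Fin d)) :
    ENNReal.ofReal ((2 * Real.pi * σ2) ^ (-(d : ℝ) / 2) * Real.exp (-‖x - m‖ ^ 2 / (2 * σ2)))
      = ∏ i, gaussianPDF (m i) σ2.toNNReal (x i) := by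
  have hpos : 0 < 2 * Real.pi * σ2 := by positivity
  have hconst : (2 * Real.pi * σ2) ^ (-(d : ℝ) / 2) = ∏ _i : Fin d, (√(2 * Real.pi * σ2))⁻¹ := by
    rw [Finset.prod_const, Finset.card_univ, Fintype.card_fin, Real.sqrt_eq_rpow,
      ← Real.rpow_neg hpos.le, ← Real.rpow_natCast, ← Real.rpow_mul hpos.le]
    ring_nf
  have hexp : Real.exp (-‖x - m‖ ^ 2 / (2 * σ2))
      = ∏ i, Real.exp (-(x i - m i) ^ 2 / (2 * σ2)) := by
    rw [← Real.exp_sum, EuclideanSpace.norm_sq_eq, ← Finset.sum_div, ← Finset.sum_neg_distrib]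
    simp
  rw [hconst, hexp, ← Finset.prod_mul_distrib,
    ENNReal.ofReal_prod_of_nonneg fun i _ => by positivity]
  simp [gaussianPDF, gaussianPDFReal, Real.coe_toNNReal _ hσ2.le]

lemma gaussianE_eq_map_pi (hσ2 : 0 < σ2) (m : EuclideanSpace ℝ (Fin d)) :
    gaussianE d m σ2
      = (Measure.pi fun i => gaussianReal (m i) σ2.toNNReal).map (WithLp.toLp 2) := by
  have hv : σ2.toNNReal ≠ 0 := by simpa using hσ2
  have : ∀ i, SigmaFinite (volume.withDensity (gaussianPDF (m i) σ2.toNNReal)) := fun i => by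
    rw [← gaussianReal_of_var_ne_zero _ hv]
    infer_instance
  simp_rw [gaussianReal_of_var_ne_zero _ hv]
  rw [Measure.pi_withDensity fun i => measurable_gaussianPDF _ _]
  ext S hS
  have hemb : MeasurableEmbedding (WithLp.toLp 2 : (Fin d → ℝ) → EuclideanSpace ℝ (Fin d)) :=
    (MeasurableEquiv.toLp 2 (Fin d → ℝ)).measurableEmbedding
  rw [Measure.map_apply hemb.measurable hS, withDensity_apply _ (hemb.measurable hS), gaussianE,
    withDensity_apply _ hS, ← (PiLp.volume_preserving_toLp (Fin d)).setLIntegral_comp_preimage_emb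
      hemb]
  refine setLIntegral_congr_fun (hemb.measurable hS) fun x _ => ?_
  rw [ofReal_gaussianE_density_eq_prod hσ2]

lemma gaussianE_eq_map_stdGaussian (hσ2 : 0 < σ2) (m : EuclideanSpace ℝ (Fin d)) :
    gaussianE d m σ2 = (stdGaussian (EuclideanSpace ℝ (Fin d))).map fun z => m + √σ2 • z := by
  simp_rw [gaussianE_eq_map_pi hσ2, gaussianReal_eq_map_std _ hσ2.le]
  rw [← Measure.pi_map_pi fun i => by fun_prop, ← map_pi_eq_stdGaussian,
    Measure.map_map (by fun_prop) (by fun_prop), Measure.map_map (by fun_prop) (by fun_prop)]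
  rfl

lemma isProbabilityMeasure_gaussianE (hσ2 : 0 < σ2) (m : EuclideanSpace ℝ (Fin d)) :
    IsProbabilityMeasure (gaussianE d m σ2) := by
  rw [gaussianE_eq_map_stdGaussian hσ2]
  exact Measure.isProbabilityMeasure_map (by fun_prop)

lemma gaussianE_eq_map_add_left (hσ2 : 0 < σ2) (m : EuclideanSpace ℝ (Fin d)) :
    gaussianE d m σ2 = (gaussianE d 0 σ2).map (m + ·) := by
  rw [gaussianE_eq_map_stdGaussian hσ2, gaussianE_eq_map_stdGaussian hσ2,
    Measure.map_map (by fun_prop) (by fun_prop)]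
  simp [Function.comp_def]

lemma gaussianE_restrict_le_restrict (hσ2 : 0 < σ2) {x y : EuclideanSpace ℝ (Fin d)}
    {H : Set (EuclideanSpace ℝ (Fin d))} (hH : MeasurableSet H)
    (hxy : ∀ z ∈ H, ‖z - x‖ ≤ ‖z - y‖) :
    (gaussianE d y σ2).restrict H ≤ (gaussianE d x σ2).restrict H := by
  simp only [gaussianE, restrict_withDensity hH]
  refine withDensity_mono ((ae_restrict_iff' hH).2 (ae_of_all _ fun z hz => ?_))
  refine ENNReal.ofReal_le_ofReal ?_
  gcongr
  exact hxy z hz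

lemma gaussianE_toReal_sub_le (hσ2 : 0 < σ2) (x y : EuclideanSpace ℝ (Fin d))
    {S : Set (EuclideanSpace ℝ (Fin d))} (hS : MeasurableSet S) :
    (gaussianE d x σ2 S).toReal - (gaussianE d y σ2 S).toReal
      ≤ 1 - 2 * gaussQ (‖x - y‖ / (2 * √σ2)) := by
  rcases eq_or_ne x y with rfl | hxy
  · simp [gaussQ_zero]
  have := isProbabilityMeasure_gaussianE hσ2 x
  have := isProbabilityMeasure_gaussianE hσ2 y
  have hσ : 0 < √σ2 := Real.sqrt_pos.2 hσ2
  have hδ : 0 < ‖x - y‖ := norm_pos_iff.2 (sub_ne_zero.2 hxy)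
  set H := {z : EuclideanSpace ℝ (Fin d) | ‖z - x‖ ≤ ‖z - y‖}
  have hH : MeasurableSet H := measurableSet_le (by fun_prop) (by fun_prop)
  have hHx : (gaussianE d x σ2 H).toReal = gaussQ (-(‖x - y‖ / (2 * √σ2))) := by
    have hpre : (fun w => x + √σ2 • w) ⁻¹' H
        = {w | -(‖x - y‖ ^ 2 / 2) / √σ2 ≤ ⟪x - y, w⟫} := by
      ext w
      rw [mem_preimage, mem_ofPred_eq, mem_ofPred_eq, add_sub_cancel_left,
        show x + √σ2 • w - y = √σ2 • w + (x - y) by abel, norm_le_norm_add_iff_inner,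
        real_inner_smul_left, real_inner_comm, div_le_iff₀ hσ, mul_comm]
    rw [gaussianE_eq_map_stdGaussian hσ2, Measure.map_apply (by fun_prop) hH, hpre,
      stdGaussian_setOf_le_inner (sub_ne_zero.2 hxy)]
    congr 1
    field_simp
  have hHy : (gaussianE d y σ2 H).toReal = gaussQ (‖x - y‖ / (2 * √σ2)) := by
    have hpre : (fun w => y + √σ2 • w) ⁻¹' H
        = {w | ‖x - y‖ ^ 2 / 2 / √σ2 ≤ ⟪x - y, w⟫} := by
      ext w
      rw [mem_preimage, mem_ofPred_eq, mem_ofPred_eq, add_sub_cancel_left,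
        show y + √σ2 • w - x = √σ2 • w - (x - y) by abel, norm_sub_le_norm_iff_inner,
        real_inner_smul_left, real_inner_comm, div_le_iff₀ hσ, mul_comm]
    rw [gaussianE_eq_map_stdGaussian hσ2, Measure.map_apply (by fun_prop) hH, hpre,
      stdGaussian_setOf_le_inner (sub_ne_zero.2 hxy)]
    congr 1
    field_simp
  calc (gaussianE d x σ2 S).toReal - (gaussianE d y σ2 S).toReal
      ≤ (gaussianE d x σ2 H).toReal - (gaussianE d y σ2 H).toReal :=
        toReal_sub_toReal_le_of_restrict_le hH hS
          (gaussianE_restrict_le_restrict hσ2 hH fun _ hz => hz)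
          (gaussianE_restrict_le_restrict hσ2 hH.compl fun _ hz => le_of_not_ge hz)
    _ = 1 - 2 * gaussQ (‖x - y‖ / (2 * √σ2)) := by
        rw [hHx, hHy, gaussQ_neg]
        ring

lemma conv_gaussianE_toReal_sub_le (hσ2 : 0 < σ2)
    {μ ν : Measure (EuclideanSpace ℝ (Fin d))} [IsProbabilityMeasure μ] [IsProbabilityMeasure ν]
    {K : Set (EuclideanSpace ℝ (Fin d))} (hμK : ∀ᵐ x ∂μ, x ∈ K) (hνK : ∀ᵐ x ∂ν, x ∈ K)
    {B : ℝ} (hK : ∀ x ∈ K, ∀ y ∈ K, ‖x - y‖ ≤ B)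
    {S : Set (EuclideanSpace ℝ (Fin d))} (hS : MeasurableSet S) :
    ((μ ∗ gaussianE d 0 σ2) S).toReal - ((ν ∗ gaussianE d 0 σ2) S).toReal
      ≤ (1 - 2 * gaussQ (B / (2 * √σ2))) * tvDist μ ν := by
  have := isProbabilityMeasure_gaussianE hσ2 (0 : EuclideanSpace ℝ (Fin d))
  have hconv : ∀ ρ : Measure (EuclideanSpace ℝ (Fin d)), [IsProbabilityMeasure ρ] →
      ((ρ ∗ gaussianE d 0 σ2) S).toReal
        = ∫ x, (gaussianE d 0 σ2 ((x + ·) ⁻¹' S)).toReal ∂ρ := fun ρ _ => by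
    rw [Measure.conv_apply_eq_lintegral _ _ hS, integral_toReal
      (measurable_measure_preimage_add_left _ hS).aemeasurable
      (ae_of_all _ fun _ => measure_lt_top _ _)]
  rw [hconv μ, hconv ν]
  refine integral_sub_integral_le_of_forall_sub_le
    (measurable_measure_preimage_add_left _ hS).ennreal_toReal hμK hνK fun x hx y hy => ?_
  rw [← Measure.map_apply (measurable_const_add x) hS, ← gaussianE_eq_map_add_left hσ2,
    ← Measure.map_apply (measurable_const_add y) hS, ← gaussianE_eq_map_add_left hσ2]
  have hQ : gaussQ (B / (2 * √σ2)) ≤ gaussQ (‖x - y‖ / (2 * √σ2)) :=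
    gaussQ_antitone (div_le_div_of_nonneg_right (hK x hx y hy) (by positivity))
  linarith [gaussianE_toReal_sub_le hσ2 x y hS]

end Gaussian

theorem tv_adasde_contract_general (d : ℕ) (t Δt γ B : ℝ)
    (ht : 0 ≤ t) (hΔt : 0 < Δt) (hγ : γ ∈ Set.Ioo (0 : ℝ) 1)
    (μ ν : Measure (EuclideanSpace ℝ (Fin d)))
    [IsProbabilityMeasure μ] [IsProbabilityMeasure ν]
    (hμ : msupport μ ⊆ Metric.closedBall 0 (B / 2))
    (hν : msupport ν ⊆ Metric.closedBall 0 (B / 2))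
    (T : EuclideanSpace ℝ (Fin d) → EuclideanSpace ℝ (Fin d)) (hT : Measurable T) :
    tvDist
        ((Measure.conv μ (gaussianE d 0 ((t + (1 + γ) * Δt) ^ 2 - t ^ 2))).map T)
        ((Measure.conv ν (gaussianE d 0 ((t + (1 + γ) * Δt) ^ 2 - t ^ 2))).map T)
      ≤ (1 - 2 * gaussQ (B / (2 * Real.sqrt ((t + (1 + γ) * Δt) ^ 2 - t ^ 2)))) *
          tvDist μ ν := by
  have hσ2 : 0 < (t + (1 + γ) * Δt) ^ 2 - t ^ 2 := by
    have : 0 < (1 + γ) * Δt := mul_pos (by linarith [hγ.1]) hΔt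
    nlinarith
  have hae : ∀ ρ : Measure (EuclideanSpace ℝ (Fin d)), msupport ρ ⊆ Metric.closedBall 0 (B / 2) →
      ∀ᵐ x ∂ρ, x ∈ Metric.closedBall 0 (B / 2) := fun ρ hρ =>
    Filter.mem_of_superset Measure.support_mem_ae (msupport_eq_support ρ ▸ hρ)
  have hdiam : ∀ x ∈ Metric.closedBall (0 : EuclideanSpace ℝ (Fin d)) (B / 2),
      ∀ y ∈ Metric.closedBall 0 (B / 2), ‖x - y‖ ≤ B := fun x hx y hy => by
    rw [mem_closedBall_zero_iff] at hx hy
    linarith [norm_sub_le x y]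
  refine tvDist_le fun A hA => ?_
  rw [Measure.map_apply hT hA, Measure.map_apply hT hA, abs_sub_le_iff]
  exact ⟨conv_gaussianE_toReal_sub_le hσ2 (hae μ hμ) (hae ν hν) hdiam (hT hA),
    tvDist_comm μ ν ▸ conv_gaussianE_toReal_sub_le hσ2 (hae ν hν) (hae μ hμ) hdiam (hT hA)⟩

/-- The AdaSDE noise-injection-then-ODE step contracts total variation:
for compactly supported `μ, ν`, `φ = N(0, σ²I_d)` with `σ² = (t+(1+γ)Δt)² − t²`, and any
Borel map `T`, `TV(T_*(μ ∗ φ), T_*(ν ∗ φ)) ≤ (1 − λ(γ))·TV(μ, ν)` where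
`λ(γ) = 2Q(B/(2σ))`. -/
theorem tv_adasde_contract (d : ℕ) (t Δt γ B : ℝ)
    (ht : 0 ≤ t) (hΔt : 0 < Δt) (hγ : γ ∈ Set.Ioo (0 : ℝ) 1) (hB : 0 < B)
    (μ ν : Measure (EuclideanSpace ℝ (Fin d)))
    [IsProbabilityMeasure μ] [IsProbabilityMeasure ν]
    (hμ : msupport μ ⊆ Metric.closedBall 0 (B / 2))
    (hν : msupport ν ⊆ Metric.closedBall 0 (B / 2))
    (T : EuclideanSpace ℝ (Fin d) → EuclideanSpace ℝ (Fin d)) (hT : Measurable T) :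
    tvDist
        ((Measure.conv μ (gaussianE d 0 ((t + (1 + γ) * Δt) ^ 2 - t ^ 2))).map T)
        ((Measure.conv ν (gaussianE d 0 ((t + (1 + γ) * Δt) ^ 2 - t ^ 2))).map T)
      ≤ (1 - 2 * gaussQ (B / (2 * Real.sqrt ((t + (1 + γ) * Δt) ^ 2 - t ^ 2)))) *
          tvDist μ ν :=
  tv_adasde_contract_general d t Δt γ B ht hΔt hγ μ ν hμ hν T hT
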